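/- For every integer n ≥ 1 and every word u of length n over {a,b}, the number of Catalan tableaux of index n+1 whose profile is u equals the number of lattice paths η (with unit north and east steps) that are weakly below the path ω_u. -/

import Mathlib

/-!
A lattice path is determined by the heights of its east steps, a weakly increasing sequence, and
a path `η` with the same endpoints as `ω_u` stays weakly below it iff its `j`-th east step is no
higher than the `j`-th east step of `ω_u`, for every `j`. So the paths below `ω_u` correspond to
weakly increasing sequences `e` bounded entrywise by the sequence `t` of east-step heights of `u`.

A Catalan tableau with profile `u` has one column of height `t j + 1` for each east step of `u`,
and it is determined by the row `r j` of the 1 in each column. The tableau conditions say that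
`r j ≤ t j` and that, for `j < j'`, `r j' ≤ t j` forces `r j' ≤ r j`. Sorting `r` gives an
admissible `e`. Conversely, fill the columns of a sorted `e` from left to right, column `j` taking
the largest remaining entry of `e` that fits into it. This greedy filling is the only filling by
the entries of `e` that satisfies the tableau conditions, so sorting and greedy filling are
inverse bijections.
-/

/-- A binary tree: empty, or a root with a left and a right subtree. -/
inductive BinTree : Type
  | nil : BinTree
  | node : BinTree → BinTree → BinTree
  deriving DecidableEq

/-- Number of vertices of a binary tree. -/
def BinTree.size : BinTree → ℕ
  | .nil => 0
  | .node l r => l.size + r.size + 1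

/-- Length (number of vertices) of the left branch. -/
def BinTree.leftBranchLen : BinTree → ℕ
  | .nil => 0
  | .node l _ => l.leftBranchLen + 1

/-- Length (number of vertices) of the right branch. -/
def BinTree.rightBranchLen : BinTree → ℕ
  | .nil => 0
  | .node _ r => r.rightBranchLen + 1

/-- Word over {a,b} (a = `true`, b = `false`) reading the vertices in symmetric
(in-)order; a vertex contributes `true` iff it has a right child. -/
def BinTree.canopyFull : BinTree → List Bool
  | .nil => []
  | .node l r => l.canopyFull ++ (decide (r ≠ BinTree.nil)) :: r.canopyFull

/-- The canopy of a binary tree with `n` vertices: the word `u₁ … u_{n-1}` over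
{a = `true`, b = `false`} with `uᵢ = a` iff the `i`-th vertex in symmetric order
has a right child.  (The last vertex in symmetric order never has a right child,
so it is dropped.) -/
def BinTree.canopy (B : BinTree) : List Bool := B.canopyFull.dropLast

/-- A Catalan tableau of index `n`: a partition `λ₁ ≥ … ≥ λ_k` with `λ₁ = n - k`,
drawn right-justified inside the `k × (n-k)` rectangle (rows bottom to top, row `i`
having `lam i` cells, occupying columns `j` with `m - lam i ≤ j < m` where
`m = n - k`), filled with 0's (`false`) and 1's (`true`) such that every column
contains exactly one 1 and no 0 has both a 1 below it in its column and a 1 to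
its right in its row.  Entries outside the diagram are forced to `false`. -/
structure CatalanTableau (n : ℕ) where
  k : ℕ
  m : ℕ
  hk : 0 < k
  hkm : k + m = n
  lam : Fin k → ℕ
  lam_le : ∀ i, lam i ≤ m
  lam_first : lam ⟨0, hk⟩ = m
  lam_anti : ∀ i j : Fin k, i ≤ j → lam j ≤ lam i
  f : Fin k → Fin m → Bool
  f_outside : ∀ (i : Fin k) (j : Fin m), (j : ℕ) < m - lam i → f i j = false
  col_one : ∀ j : Fin m, ∃! i : Fin k, f i j = true
  no_bad : ∀ (i : Fin k) (j : Fin m), m - lam i ≤ (j : ℕ) → f i j = false →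
    ¬ ((∃ i' : Fin k, i' < i ∧ f i' j = true) ∧
       (∃ j' : Fin m, (j : ℕ) < (j' : ℕ) ∧ f i j' = true))

/-- The profile of a Catalan tableau: the NW border of its Ferrers diagram read
from the bottom-left corner of the rectangle to its top-right corner
(a = `true` for a north step, b = `false` for an east step), with the first
letter (always a north step) deleted. -/
def CatalanTableau.profile {n : ℕ} (T : CatalanTableau n) : List Bool :=
  ((List.finRange T.k).flatMap (fun i =>
    true :: List.replicate
      (T.lam i - (if h : (i : ℕ) + 1 < T.k then T.lam ⟨(i : ℕ) + 1, h⟩ else 0)) false)).tail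

/-- Number of 1's in the first (bottom) row of a Catalan tableau. -/
noncomputable def CatalanTableau.onesFirstRow {n : ℕ} (T : CatalanTableau n) : ℕ :=
  Nat.card {j : Fin T.m // T.f ⟨0, T.hk⟩ j = true}

/-- An entry is restricted if it is a 0 (in a cell of the diagram) lying above
some 1 in its column. -/
def CatalanTableau.Restricted {n : ℕ} (T : CatalanTableau n)
    (i : Fin T.k) (j : Fin T.m) : Prop :=
  T.m - T.lam i ≤ (j : ℕ) ∧ T.f i j = false ∧ ∃ i' : Fin T.k, i' < i ∧ T.f i' j = true

/-- Number of unrestricted rows (rows of the rectangle containing no restricted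
entry). -/
noncomputable def CatalanTableau.unrestrictedRows {n : ℕ} (T : CatalanTableau n) : ℕ :=
  Nat.card {i : Fin T.k // ∀ j : Fin T.m, ¬ T.Restricted i j}

/-- `weaklyBelow ω η`: the lattice paths coded by `ω`, `η` (a = `true` = north
step, b = `false` = east step, both starting at the origin) have the same
endpoints and `η` never passes strictly above `ω`. -/
def weaklyBelow (ω η : List Bool) : Prop :=
  η.length = ω.length ∧ η.count true = ω.count true ∧
    ∀ t : ℕ, (η.take t).count true ≤ (ω.take t).count true

/-- Heights at which the successive east steps of a path occur. -/
def eastHeightsAux : ℕ → List Bool → List ℕ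
  | _, [] => []
  | h, true :: w => eastHeightsAux (h + 1) w
  | h, false :: w => h :: eastHeightsAux h w

def eastHeights (w : List Bool) : List ℕ := eastHeightsAux 0 w

/-- Number of horizontal contacts of two paths: unit east edges traversed by
both paths. -/
def contacts (ω η : List Bool) : ℕ :=
  ((eastHeights ω).zip (eastHeights η)).countP (fun p => p.1 == p.2)

/-- Number of trailing north steps of a path. -/
def trailingNorth (w : List Bool) : ℕ := (w.reverse.takeWhile (· == true)).length

/-- Number of left edges, i.e. of vertices having a left child. -/
def BinTree.leftEdgeCount : BinTree → ℕ
  | .nil => 0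
  | .node l r => l.leftEdgeCount + r.leftEdgeCount + (if l = BinTree.nil then 0 else 1)

/-- Number of vertices having no right child. -/
def BinTree.noRightCount : BinTree → ℕ
  | .nil => 0
  | .node l r => l.noRightCount + r.noRightCount + (if r = BinTree.nil then 1 else 0)

/-- Symmetric-order traversal recording, for each vertex, whether it has a left
child, whether it has a right child, and its right height (the second argument
is the right height of the current root). -/
def BinTree.inorderAux : BinTree → ℕ → List (Bool × Bool × ℕ)
  | .nil, _ => []
  | .node l r, h =>
      BinTree.inorderAux l h ++
        (decide (l ≠ BinTree.nil), decide (r ≠ BinTree.nil), h) :: BinTree.inorderAux r (h + 1)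

def BinTree.inorder (B : BinTree) : List (Bool × Bool × ℕ) := B.inorderAux 0

/-- The sequence `ρ₁, …, ρ_m`: right heights of the parents of the left edges,
the left edges being ordered by their parents in symmetric order. -/
def BinTree.rhoList (B : BinTree) : List ℕ :=
  (B.inorder.filter (fun v => v.1)).map (fun v => v.2.2)

def hsAux : List (Bool × Bool × ℕ) → ℕ → List ℕ
  | [], _ => []
  | v :: rest, c => if v.2.1 then hsAux rest (c + 1) else c :: hsAux rest c

/-- The sequence `h₁, …, h_m`: for each vertex with no right child (in symmetric
order, excluding the last vertex in symmetric order), the number of vertices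
preceding it in symmetric order that have a right child. -/
def BinTree.hList (B : BinTree) : List ℕ := (hsAux B.inorder 0).dropLast

/-- Leaves of the completion `γ(B)` in symmetric order, each recorded as `true`
if it is a left child of its parent and `false` if it is a right child; the
boolean argument records whether the current subtree sits as a left child. -/
def BinTree.gammaLeavesAux : BinTree → Bool → List Bool
  | .nil, isLeft => [isLeft]
  | .node l r, _ => BinTree.gammaLeavesAux l true ++ BinTree.gammaLeavesAux r false

/-- The word of the leaves of the complete binary tree `γ(B)` in symmetric order
(a = `true` for a left child, b = `false` for a right child). -/
def BinTree.leafWord : BinTree → List Bool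
  | .nil => []
  | .node l r => BinTree.gammaLeavesAux l true ++ BinTree.gammaLeavesAux r false

open List

theorem eastHeightsAux_eq_map (h : ℕ) (w : List Bool) :
    eastHeightsAux h w = (eastHeights w).map (· + h) := by
  induction w generalizing h with
  | nil => rfl
  | cons b w ih =>
    cases b
    · rw [eastHeights, eastHeightsAux, eastHeightsAux, ih, ih 0]
      simp
    · rw [eastHeights, eastHeightsAux, eastHeightsAux, ih, ih 1, map_map]
      congr 1
      funext x
      simp only [Function.comp_apply]
      omega

@[simp] theorem eastHeights_nil : eastHeights [] = [] := rfl

@[simp] theorem eastHeights_cons_true (w : List Bool) :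
    eastHeights (true :: w) = (eastHeights w).map (· + 1) :=
  eastHeightsAux_eq_map 1 w

@[simp] theorem eastHeights_cons_false (w : List Bool) :
    eastHeights (false :: w) = 0 :: eastHeights w := by
  rw [eastHeights, eastHeightsAux, eastHeightsAux_eq_map 0 w]
  simp

@[simp] theorem length_eastHeights (w : List Bool) : (eastHeights w).length = w.count false := by
  induction w with
  | nil => rfl
  | cons b w ih => cases b <;> simp [ih]

theorem le_count_true_of_mem_eastHeights {w : List Bool} {x : ℕ} (hx : x ∈ eastHeights w) :
    x ≤ w.count true := by
  induction w generalizing x with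
  | nil => simp at hx
  | cons b w ih =>
    cases b
    · simp only [eastHeights_cons_false, mem_cons] at hx
      rcases hx with rfl | hx
      · exact Nat.zero_le _
      · simpa using ih hx
    · obtain ⟨y, hy, rfl⟩ := mem_map.1 (by simpa using hx)
      simpa using ih hy

theorem sortedLE_eastHeights (w : List Bool) : (eastHeights w).SortedLE := by
  rw [sortedLE_iff_pairwise]
  induction w with
  | nil => exact Pairwise.nil
  | cons b w ih =>
    cases b
    · simpa using ih
    · simpa [pairwise_map] using ih

theorem eq_nil_of_count_eq_zero {w : List Bool} (ht : w.count true = 0)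
    (hf : w.count false = 0) : w = [] := by
  have := count_true_add_count_false w
  exact length_eq_zero_iff.1 (by omega)

theorem eq_of_eastHeights_eq {w w' : List Bool} (hc : w.count true = w'.count true)
    (he : eastHeights w = eastHeights w') : w = w' := by
  induction w generalizing w' with
  | nil =>
    exact (eq_nil_of_count_eq_zero (by simpa using hc.symm)
      (by simpa using congrArg length he.symm)).symm
  | cons b w ih =>
    cases w' with
    | nil => exact eq_nil_of_count_eq_zero (by simpa using hc) (by simpa using congrArg length he)
    | cons b' w' =>
      have head_ne (E E' : List ℕ) : E.map (· + 1) ≠ 0 :: E' := by cases E <;> simp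
      cases b <;> cases b' <;> simp only [eastHeights_cons_true, eastHeights_cons_false] at he
      · rw [ih (by simpa using hc) (cons_injective he)]
      · exact absurd he.symm (head_ne _ _)
      · exact absurd he (head_ne _ _)
      · rw [ih (by simpa using hc) (map_injective_iff.2 (add_left_injective 1) he)]

theorem eastHeights_replicate_false (a : ℕ) :
    eastHeights (replicate a false) = replicate a 0 := by
  induction a with
  | zero => rfl
  | succ a ih => simp [replicate_succ, ih]

theorem eastHeights_replicate_true (a : ℕ) : eastHeights (replicate a true) = [] := by
  induction a with
  | zero => rfl
  | succ a ih => simp [replicate_succ, ih]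

theorem exists_eastHeights_eq (K : ℕ) (e : List ℕ) (he : e.SortedLE)
    (hK : ∀ x ∈ e, x ≤ K) :
    ∃ w : List Bool, w.count true = K ∧ eastHeights w = e := by
  rw [sortedLE_iff_pairwise] at he
  induction K generalizing e with
  | zero =>
    refine ⟨replicate e.length false, by simp [count_replicate], ?_⟩
    rw [eastHeights_replicate_false, eq_comm, eq_replicate_iff]
    exact ⟨rfl, fun x hx => Nat.le_zero.1 (hK x hx)⟩
  | succ K ihK =>
    induction e with
    | nil => exact ⟨replicate (K + 1) true, by simp, eastHeights_replicate_true _⟩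
    | cons x e ihe =>
      obtain ⟨hxe, hes⟩ := pairwise_cons.1 he
      rcases x with _ | y
      · obtain ⟨w, hw, hwe⟩ := ihe hes fun z hz => hK z (mem_cons_of_mem _ hz)
        exact ⟨false :: w, by simpa using hw, by simp [hwe]⟩
      · have hpos : ∀ z ∈ (y + 1) :: e, 1 ≤ z := by
          rintro z (_ | ⟨_, hz⟩)
          exacts [Nat.le_add_left 1 y, le_trans (Nat.le_add_left 1 y) (hxe z hz)]
        obtain ⟨w, hw, hwe⟩ := ihK (((y + 1) :: e).map (· - 1))
          (he.map _ fun a b hab => Nat.sub_le_sub_right hab 1)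
          (by
            simp only [mem_map]
            rintro _ ⟨z, hz, rfl⟩
            have := hK z hz
            omega)
        refine ⟨true :: w, by simpa using hw, ?_⟩
        rw [eastHeights_cons_true, hwe, map_map]
        conv_rhs => rw [← map_id ((y + 1) :: e)]
        exact map_congr_left fun z hz => by
          simp only [Function.comp_apply, id]
          have := hpos z hz
          omega

-- The `(j + 1)`-th east step is preceded by `(eastHeights w)[j]` north steps, so it lies among the
-- first `j + x + 1` steps iff that height is at most `x`.
theorem getElem_eastHeights_le_iff {w : List Bool} {j : ℕ} (hj : j < (eastHeights w).length)
    (x : ℕ) : (eastHeights w)[j] ≤ x ↔ j < (w.take (j + x + 1)).count false := by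
  induction w generalizing j x with
  | nil => simp at hj
  | cons b w ih =>
    cases b
    · rcases j with _ | j
      · simp
      · simp only [eastHeights_cons_false, getElem_cons_succ, take_succ_cons, count_cons]
        rw [ih (by simpa using hj), show j + 1 + x = j + x + 1 by omega]
        simp
    · simp only [eastHeights_cons_true, getElem_map]
      have hj' : j < (eastHeights w).length := by simpa using hj
      rcases x with _ | x
      · have : (w.take j).count false ≤ j :=
          (count_le_length).trans (length_take_le _ _)
        simpa [take_succ_cons] using this
      · rw [show j + (x + 1) + 1 = j + x + 1 + 1 by omega, take_succ_cons, count_cons,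
          Nat.add_le_add_iff_right, ih hj']
        simp

theorem count_true_take_le_iff {ω η : List Bool} (hlen : η.length = ω.length) (s : ℕ) :
    (η.take s).count true ≤ (ω.take s).count true ↔
      (ω.take s).count false ≤ (η.take s).count false := by
  have hη := count_true_add_count_false (η.take s)
  have hω := count_true_add_count_false (ω.take s)
  rw [length_take, hlen] at hη
  rw [length_take] at hω
  omega

theorem forall₂_eastHeights_iff {ω η : List Bool} (hfalse : η.count false = ω.count false) :
    Forall₂ (· ≤ ·) (eastHeights η) (eastHeights ω) ↔
      ∀ s, (ω.take s).count false ≤ (η.take s).count false := by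
  have hlen : (eastHeights η).length = (eastHeights ω).length := by simp [hfalse]
  simp only [forall₂_iff_get, get_eq_getElem]
  constructor
  · rintro ⟨-, hle⟩ s
    by_contra! hlt
    set j := (η.take s).count false
    have hj : j < (eastHeights ω).length :=
      lt_of_lt_of_le hlt (by simpa using (take_sublist s ω).count_le false)
    have hjs : j + (s - (j + 1)) + 1 = s := by
      have : (ω.take s).count false ≤ s := count_le_length.trans (length_take_le _ _)
      omega
    have hω := (getElem_eastHeights_le_iff hj (s - (j + 1))).2 (by rwa [hjs])
    have hη := (getElem_eastHeights_le_iff (hlen ▸ hj) (s - (j + 1))).1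
      ((hle j (hlen ▸ hj) hj).trans hω)
    rw [hjs] at hη
    exact lt_irrefl _ hη
  · refine fun hE => ⟨hlen, fun j hη hω => ?_⟩
    rw [getElem_eastHeights_le_iff hη]
    exact lt_of_lt_of_le ((getElem_eastHeights_le_iff hω _).1 le_rfl) (hE _)

theorem weaklyBelow_iff {ω η : List Bool} :
    weaklyBelow ω η ↔ η.count true = ω.count true ∧
      Forall₂ (· ≤ ·) (eastHeights η) (eastHeights ω) := by
  have hη := count_true_add_count_false η
  have hω := count_true_add_count_false ω
  constructor
  · rintro ⟨hlen, hcount, hdom⟩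
    refine ⟨hcount, (forall₂_eastHeights_iff (by omega)).2 fun s => ?_⟩
    exact (count_true_take_le_iff hlen s).1 (hdom s)
  · rintro ⟨hcount, hle⟩
    have hfalse : η.count false = ω.count false := by simpa using hle.length_eq
    have hlen : η.length = ω.length := by omega
    refine ⟨hlen, hcount, fun s => ?_⟩
    exact (count_true_take_le_iff hlen s).2 ((forall₂_eastHeights_iff hfalse).1 hle s)

theorem card_weaklyBelow_eq_card_sortedLE (u : List Bool) :
    Nat.card {η : List Bool // weaklyBelow u η} =
      Nat.card {e : List ℕ // e.SortedLE ∧ Forall₂ (· ≤ ·) e (eastHeights u)} := by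
  refine Nat.card_eq_of_bijective (fun η =>
    ⟨eastHeights η.1, sortedLE_eastHeights _, (weaklyBelow_iff.1 η.2).2⟩) ⟨?_, ?_⟩
  · rintro ⟨η, hη⟩ ⟨η', hη'⟩ h
    exact Subtype.ext (eq_of_eastHeights_eq
      ((weaklyBelow_iff.1 hη).1.trans (weaklyBelow_iff.1 hη').1.symm) (congrArg Subtype.val h))
  · rintro ⟨e, hsorted, hle⟩
    have hbound : ∀ x ∈ e, x ≤ u.count true := by
      intro x hx
      obtain ⟨i, hi, rfl⟩ := getElem_of_mem hx
      have hi' : i < (eastHeights u).length := hle.length_eq ▸ hi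
      have hxy : e[i] ≤ (eastHeights u)[i] := by simpa using hle.get hi hi'
      exact hxy.trans (le_count_true_of_mem_eastHeights (getElem_mem hi'))
    obtain ⟨w, hw, rfl⟩ := exists_eastHeights_eq _ e hsorted hbound
    exact ⟨⟨w, weaklyBelow_iff.2 ⟨hw, hle⟩⟩, rfl⟩

-- `r[j]` is the row of the 1 in column `j`, which has cells in rows `0, …, t[j]`; the pairwise
-- condition is `CatalanTableau.no_bad`.
def IsTableauRows (t r : List ℕ) : Prop :=
  Forall₂ (· ≤ ·) r t ∧ (t.zip r).Pairwise fun p q => q.2 ≤ p.1 → q.2 ≤ p.2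

def maxLE (t : ℕ) (e : List ℕ) : ℕ := ((e.filter (· ≤ t)).max?).getD 0

theorem le_maxLE {t y : ℕ} {e : List ℕ} (hy : y ∈ e) (hyt : y ≤ t) : y ≤ maxLE t e :=
  le_max?_getD_of_mem (mem_filter.2 ⟨hy, by simpa using hyt⟩)

theorem maxLE_mem {t z : ℕ} {e : List ℕ} (hz : z ∈ e) (hzt : z ≤ t) :
    maxLE t e ∈ e ∧ maxLE t e ≤ t := by
  have hz' : z ∈ e.filter (· ≤ t) := mem_filter.2 ⟨hz, by simpa using hzt⟩
  obtain ⟨a, ha⟩ := Option.isSome_iff_exists.1 (isSome_max?_of_mem hz')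
  simpa [maxLE, ha] using mem_filter.1 (max?_mem ha)

def greedyRows : List ℕ → List ℕ → List ℕ
  | [], _ => []
  | t :: ts, e => maxLE t e :: greedyRows ts (e.erase (maxLE t e))

theorem forall₂_le_erase {α : Type*} [Preorder α] [DecidableEq α] {a x : α} {t e : List α}
    (ht : (a :: t).Pairwise (· ≤ ·)) (he : Forall₂ (· ≤ ·) e (a :: t)) (hx : x ∈ e) :
    Forall₂ (· ≤ ·) (e.erase x) t := by
  induction e generalizing a t with
  | nil => simp at hx
  | cons y e ih =>
    obtain ⟨hya, he⟩ := forall₂_cons.1 he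
    by_cases hyx : y = x
    · rwa [← hyx, erase_cons_head]
    rw [erase_cons_tail (by simpa using hyx)]
    have hx : x ∈ e := (mem_cons.1 hx).resolve_left (Ne.symm hyx)
    cases t with
    | nil => simp [forall₂_nil_right_iff.1 he] at hx
    | cons b t =>
      exact forall₂_cons.2 ⟨hya.trans (rel_of_pairwise_cons ht mem_cons_self),
        ih (pairwise_cons.1 ht).2 he hx⟩

theorem greedyRows_spec {t e : List ℕ} (ht : t.Pairwise (· ≤ ·))
    (he : Forall₂ (· ≤ ·) e t) :
    greedyRows t e ~ e ∧ IsTableauRows t (greedyRows t e) := by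
  induction t generalizing e with
  | nil =>
    rw [forall₂_nil_right_iff.1 he]
    exact ⟨Perm.refl _, Forall₂.nil, Pairwise.nil⟩
  | cons a t ih =>
    obtain ⟨e₀, e', he₀, -, rfl⟩ := forall₂_cons_right_iff.1 he
    set x := maxLE a (e₀ :: e')
    obtain ⟨hxe, hxa⟩ := maxLE_mem mem_cons_self he₀
    obtain ⟨hperm, hle, hpair⟩ :=
      ih (pairwise_cons.1 ht).2 (forall₂_le_erase ht he hxe)
    refine ⟨(hperm.cons x).trans (perm_cons_erase hxe).symm,
      forall₂_cons.2 ⟨hxa, hle⟩, ?_⟩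
    refine pairwise_cons.2 ⟨fun q hq hqa => le_maxLE ?_ hqa, hpair⟩
    exact mem_of_mem_erase (hperm.subset (of_mem_zip hq).2)

theorem greedyRows_eq_of_perm {t r e : List ℕ} (hr : IsTableauRows t r) (he : e ~ r) :
    greedyRows t e = r := by
  induction t generalizing r e with
  | nil => rw [forall₂_nil_right_iff.1 hr.1]; rfl
  | cons a t ih =>
    obtain ⟨hle, hpair⟩ := hr
    obtain ⟨r₀, r, hr₀, hrt, rfl⟩ := forall₂_cons_right_iff.1 hle
    rw [zip_cons_cons, pairwise_cons] at hpair
    have hmax : maxLE a e = r₀ := by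
      have hr₀e : r₀ ∈ e := he.mem_iff.2 mem_cons_self
      obtain ⟨hxe, hxa⟩ := maxLE_mem hr₀e hr₀
      refine le_antisymm ?_ (le_maxLE hr₀e hr₀)
      rcases mem_cons.1 (he.subset hxe) with hx | hx
      · exact hx.le
      · rw [← map_snd_zip hrt.length_eq.le] at hx
        obtain ⟨q, hq, hqx⟩ := mem_map.1 hx
        exact hqx ▸ hpair.1 q hq (hqx ▸ hxa)
    have herase : e.erase r₀ ~ r := by simpa using he.erase r₀
    simp only [greedyRows, hmax, ih ⟨hrt, hpair.2⟩ herase]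

theorem forall₂_le_of_perm {α : Type*} [LinearOrder α] {t r e : List α}
    (ht : t.Pairwise (· ≤ ·)) (hr : Forall₂ (· ≤ ·) r t) (he : e.Pairwise (· ≤ ·))
    (her : e ~ r) :
    Forall₂ (· ≤ ·) e t := by
  induction t generalizing r e with
  | nil =>
    obtain rfl := forall₂_nil_right_iff.1 hr
    rw [her.eq_nil]
    exact Forall₂.nil
  | cons a t ih =>
    obtain ⟨r₀, r', hr₀, -, rfl⟩ := forall₂_cons_right_iff.1 hr
    obtain ⟨y, e, rfl⟩ : ∃ y e', e = y :: e' := by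
      cases e with
      | nil => simp at her
      | cons y e => exact ⟨y, e, rfl⟩
    have hy : y ∈ r₀ :: r' := her.subset mem_cons_self
    have hyr₀ : y ≤ r₀ := by
      rcases mem_cons.1 (her.symm.subset mem_cons_self) with h | h
      · exact h.ge
      · exact rel_of_pairwise_cons he h
    refine forall₂_cons.2 ⟨hyr₀.trans hr₀, ?_⟩
    exact ih (pairwise_cons.1 ht).2 (forall₂_le_erase ht hr hy) (pairwise_cons.1 he).2
      ((perm_cons_erase hy).symm.trans her.symm |>.cons_inv |>.symm)

theorem isTableauRows_iff {t r : List ℕ} :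
    IsTableauRows t r ↔ ∃ hlen : r.length = t.length,
      (∀ j (hj : j < t.length), r[j] ≤ t[j]) ∧
      ∀ j j' (_ : j < j') (_ : j' < t.length), r[j'] ≤ t[j] → r[j'] ≤ r[j] := by
  rw [IsTableauRows, forall₂_iff_get, pairwise_iff_getElem]
  simp only [get_eq_getElem, length_zip, getElem_zip]
  constructor
  · rintro ⟨⟨hlen, hle⟩, hpair⟩
    exact ⟨hlen, fun j hj => hle j (hlen ▸ hj) hj,
      fun j j' hjj' hj' => hpair j j' (by omega) (by omega) hjj'⟩
  · rintro ⟨hlen, hle, hpair⟩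
    exact ⟨⟨hlen, fun j _ hj => hle j hj⟩,
      fun j j' _ hj' hjj' => hpair j j' hjj' (by omega)⟩

theorem card_sortedLE_eq_card_isTableauRows {t : List ℕ} (ht : t.SortedLE) :
    Nat.card {e : List ℕ // e.SortedLE ∧ Forall₂ (· ≤ ·) e t} =
      Nat.card {r : List ℕ // IsTableauRows t r} := by
  rw [sortedLE_iff_pairwise] at ht
  refine Nat.card_eq_of_bijective
    (fun e => ⟨greedyRows t e.1, (greedyRows_spec ht e.2.2).2⟩) ⟨?_, ?_⟩
  · rintro ⟨e, hs, he⟩ ⟨e', hs', he'⟩ h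
    have h : greedyRows t e = greedyRows t e' := congrArg Subtype.val h
    have hperm : e ~ e' :=
      (greedyRows_spec ht he).1.symm.trans (h ▸ (greedyRows_spec ht he').1)
    exact Subtype.ext (hperm.eq_of_sortedLE hs hs')
  · rintro ⟨r, hr⟩
    have hs : (r.insertionSort (· ≤ ·)).SortedLE := sortedLE_insertionSort
    have hperm : r.insertionSort (· ≤ ·) ~ r := perm_insertionSort _ _
    exact ⟨⟨_, hs, forall₂_le_of_perm ht hr.1 hs.pairwise hperm⟩,
      Subtype.ext (greedyRows_eq_of_perm hr hperm)⟩

theorem lt_countP_iff {α : Type*} {p : α → Bool} {l : List α}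
    (hl : l.Pairwise fun a b => p b → p a) {j : ℕ} (hj : j < l.length) :
    j < l.countP p ↔ p l[j] := by
  induction l generalizing j with
  | nil => simp at hj
  | cons a l ih =>
    obtain ⟨hal, hl⟩ := pairwise_cons.1 hl
    by_cases ha : p a
    · rcases j with _ | j
      · simp [ha]
      · simp [ha, ih hl (by simpa using hj)]
    · have hzero : l.countP p = 0 :=
        countP_eq_zero.2 fun b hb hpb => ha (hal b hb hpb)
      have hnot : ¬ p (a :: l)[j] := by
        rcases j with _ | j
        · simpa using ha
        · exact fun h => ha (hal _ (getElem_mem _) h)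
      simp [ha, hzero, hnot]

-- The columns of the diagram with profile `u` are the east steps of `u`; the one at height `h`
-- has cells in rows `0, …, h`.
def rowLength (u : List Bool) (i : ℕ) : ℕ := (eastHeights u).countP (i ≤ ·)

section RowLength

variable (w : List Bool) (i : ℕ)

@[simp] theorem rowLength_zero : rowLength w 0 = w.count false := by
  simp [rowLength]

@[simp] theorem rowLength_cons_true_succ : rowLength (true :: w) (i + 1) = rowLength w i := by
  simp [rowLength, countP_map, Function.comp_def]

@[simp] theorem rowLength_cons_false_succ :
    rowLength (false :: w) (i + 1) = rowLength w (i + 1) := by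
  simp [rowLength]

@[simp] theorem rowLength_replicate_false_append_succ (a : ℕ) :
    rowLength (replicate a false ++ w) (i + 1) = rowLength w (i + 1) := by
  induction a with
  | zero => rfl
  | succ a ih => rw [replicate_succ, cons_append, rowLength_cons_false_succ, ih]

theorem antitone_rowLength : Antitone (rowLength w) :=
  antitone_nat_of_succ_le fun i => countP_mono_left fun x _ h => by
    simp only [decide_eq_true_eq] at h ⊢
    omega

theorem rowLength_eq_zero {w : List Bool} {i : ℕ} (hi : w.count true < i) : rowLength w i = 0 :=
  countP_eq_zero.2 fun x hx => by
    have := le_count_true_of_mem_eastHeights hx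
    simp only [decide_eq_true_eq]
    omega

theorem count_false_sub_rowLength_le_iff {w : List Bool} {j : ℕ} (i : ℕ)
    (hj : j < (eastHeights w).length) :
    w.count false - rowLength w i ≤ j ↔ i ≤ (eastHeights w)[j] := by
  have hsplit := length_eq_countP_add_countP (· < i) (l := eastHeights w)
  have hlt := lt_countP_iff (p := (· < i)) ((sortedLE_eastHeights w).pairwise.imp
    fun hab hb => by simp only [decide_eq_true_eq] at hb ⊢; omega) hj
  simp only [length_eastHeights, decide_eq_true_eq, not_lt] at hsplit hlt
  rw [rowLength]
  omega

end RowLength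

-- The NW border of the diagram with row lengths `L 0 ≥ … ≥ L (k - 1)`, including the first
-- north step that the profile drops.
def blocks (k : ℕ) (L : ℕ → ℕ) : List Bool :=
  (range k).flatMap fun i => true :: replicate (L i - L (i + 1)) false

theorem blocks_succ (k : ℕ) (L : ℕ → ℕ) :
    blocks (k + 1) L = true :: (replicate (L 0 - L 1) false ++ blocks k (fun i => L (i + 1))) := by
  rw [blocks, range_succ_eq_map, flatMap_cons, flatMap_map]
  rfl

@[simp] theorem count_true_blocks (k : ℕ) (L : ℕ → ℕ) : (blocks k L).count true = k := by
  induction k generalizing L with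
  | zero => rfl
  | succ k ih => simp [blocks_succ, count_replicate, ih]

theorem rowLength_tail_blocks {k : ℕ} {L : ℕ → ℕ} (hL : Antitone L) (hk : L k = 0)
    (hk0 : 0 < k) (i : ℕ) : rowLength (blocks k L).tail i = L i := by
  induction k generalizing L i with
  | zero => omega
  | succ k ih =>
    rw [blocks_succ, tail_cons]
    rcases k with _ | k
    · rcases i with _ | i
      · simp [blocks, hk]
      · have hLi : L (i + 1) = 0 := Nat.le_zero.1 (hk ▸ hL (by omega))
        simp [blocks, rowLength, eastHeights_replicate_false, hLi]
    · set B := blocks (k + 1) fun i => L (i + 1)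
      have hB : B = true :: B.tail := by simp only [B, blocks_succ, tail_cons]
      have ih' := ih (L := fun i => L (i + 1)) (fun a b hab => hL (by omega)) hk (by omega)
      rcases i with _ | i
      · have h0 : B.tail.count false = L 1 := by simpa using ih' 0
        have h10 := hL (Nat.zero_le 1)
        rw [rowLength_zero, hB, count_append, count_replicate_self,
          count_cons_of_ne (by decide), h0]
        omega
      · rw [hB, rowLength_replicate_false_append_succ, rowLength_cons_true_succ, ih']

theorem blocks_rowLength (u : List Bool) :
    blocks (u.count true + 1) (rowLength u) = true :: u := by
  suffices ∀ a, blocks ((replicate a false ++ u).count true + 1)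
      (rowLength (replicate a false ++ u)) = true :: (replicate a false ++ u) from this 0
  induction u with
  | nil =>
    intro a
    simp [blocks, count_replicate, rowLength_eq_zero]
  | cons b u ih =>
    intro a
    cases b
    · simpa [replicate_succ'] using ih (a + 1)
    · have hshift : (fun i => rowLength (replicate a false ++ true :: u) (i + 1)) = rowLength u :=
        funext fun i => by simp
      have hcount : (replicate a false ++ true :: u).count true = u.count true + 1 := by
        simp [count_replicate]
      have ih0 := ih 0
      simp only [replicate_zero, nil_append] at ih0
      rw [hcount, blocks_succ, hshift, ih0]
      simp

namespace CatalanTableau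

variable {n : ℕ} (T : CatalanTableau n)

def rowLen (i : ℕ) : ℕ := if h : i < T.k then T.lam ⟨i, h⟩ else 0

theorem rowLen_of_lt {i : ℕ} (h : i < T.k) : T.rowLen i = T.lam ⟨i, h⟩ := dif_pos h

theorem antitone_rowLen : Antitone T.rowLen := by
  intro i i' hii'
  unfold rowLen
  split_ifs with h' h
  · exact T.lam_anti ⟨i, h⟩ ⟨i', h'⟩ hii'
  · omega
  · exact Nat.zero_le _
  · exact le_rfl

theorem blocks_rowLen : blocks T.k T.rowLen = true :: T.profile := by
  obtain ⟨k, hk⟩ : ∃ k, T.k = k + 1 := ⟨T.k - 1, by have := T.hk; omega⟩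
  have hflat : blocks T.k T.rowLen = (finRange T.k).flatMap fun i => true :: replicate
      (T.lam i - if h : (i : ℕ) + 1 < T.k then T.lam ⟨(i : ℕ) + 1, h⟩ else 0) false := by
    rw [blocks, ← map_coe_finRange_eq_range, flatMap_map]
    congr 1
    funext i
    rw [T.rowLen_of_lt i.isLt]
    rfl
  rw [profile, ← hflat, hk, blocks_succ]
  rfl

theorem shape_of_profile_eq {u : List Bool} (h : T.profile = u) :
    T.k = u.count true + 1 ∧ T.m = u.count false ∧ T.rowLen = rowLength u := by
  have hblocks : blocks T.k T.rowLen = true :: u := h ▸ T.blocks_rowLen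
  have hk : T.k = u.count true + 1 := by simpa using congrArg (count true) hblocks
  have hrow : T.rowLen = rowLength u := funext fun i => by
    have := rowLength_tail_blocks T.antitone_rowLen (dif_neg (lt_irrefl _)) T.hk i
    rwa [hblocks, tail_cons, eq_comm] at this
  refine ⟨hk, ?_, hrow⟩
  rw [← rowLength_zero, ← hrow, T.rowLen_of_lt T.hk, T.lam_first]

noncomputable def oneRow (j : Fin T.m) : Fin T.k := (T.col_one j).exists.choose

theorem f_eq_true_iff {i : Fin T.k} {j : Fin T.m} : T.f i j = true ↔ i = T.oneRow j :=
  ⟨fun h => (T.col_one j).unique h (T.col_one j).exists.choose_spec,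
    fun h => h ▸ (T.col_one j).exists.choose_spec⟩

noncomputable def rowSeq : List ℕ := ofFn fun j => (T.oneRow j : ℕ)

@[simp] theorem length_rowSeq : T.rowSeq.length = T.m := length_ofFn

theorem f_eq_decide (i : Fin T.k) (j : Fin T.m) :
    T.f i j = decide ((i : ℕ) = T.rowSeq[(j : ℕ)]'(by simp)) := by
  rw [Bool.eq_iff_iff, f_eq_true_iff, decide_eq_true_iff]
  simp only [rowSeq, List.getElem_ofFn, Fin.ext_iff]

theorem eq_of_rowSeq_eq {T T' : CatalanTableau n} (hk : T.k = T'.k) (hm : T.m = T'.m)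
    (hlam : T.rowLen = T'.rowLen) (hrow : T.rowSeq = T'.rowSeq) : T = T' := by
  have hl (i) : T.lam i = T.rowLen i := (T.rowLen_of_lt i.isLt).symm
  have hl' (i) : T'.lam i = T'.rowLen i := (T'.rowLen_of_lt i.isLt).symm
  have hf := T.f_eq_decide
  have hf' := T'.f_eq_decide
  cases T
  cases T'
  dsimp only at hk hm
  subst hk hm
  congr
  · exact funext fun i => (hl i).trans ((congrFun hlam i).trans (hl' i).symm)
  · refine funext fun i => funext fun j => (hf i j).trans ((hf' i j).trans ?_).symm
    simp only [hrow]

theorem getElem_rowSeq {j : ℕ} (hj : j < T.rowSeq.length) :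
    T.rowSeq[j] = T.oneRow ⟨j, by simpa using hj⟩ :=
  List.getElem_ofFn hj

theorem sub_lam_le_iff {u : List Bool} (h : T.profile = u) (i : Fin T.k) {j : ℕ}
    (hj : j < (eastHeights u).length) :
    T.m - T.lam i ≤ j ↔ (i : ℕ) ≤ (eastHeights u)[j] := by
  obtain ⟨-, hm, hrow⟩ := T.shape_of_profile_eq h
  rw [← count_false_sub_rowLength_le_iff i hj, ← hm, ← congrFun hrow, T.rowLen_of_lt i.isLt]

theorem isTableauRows_rowSeq {u : List Bool} (h : T.profile = u) :
    IsTableauRows (eastHeights u) T.rowSeq := by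
  have hm : T.m = (eastHeights u).length := by simpa using (T.shape_of_profile_eq h).2.1
  have hone (j : Fin T.m) : T.f (T.oneRow j) j = true := T.f_eq_true_iff.2 rfl
  rw [isTableauRows_iff]
  refine ⟨by simp [hm], fun j hj => ?_, fun j j' hjj' hj' hle => ?_⟩
  · rw [getElem_rowSeq, ← T.sub_lam_le_iff h _ hj]
    by_contra! hout
    have := T.f_outside (T.oneRow ⟨j, _⟩) ⟨j, hm ▸ hj⟩ hout
    simp [hone] at this
  · simp only [getElem_rowSeq] at hle ⊢
    set c : Fin T.m := ⟨j, by omega⟩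
    set c' : Fin T.m := ⟨j', by omega⟩
    by_contra! hlt
    refine T.no_bad (T.oneRow c') c ((T.sub_lam_le_iff h _ (by omega)).2 hle) ?_
      ⟨⟨T.oneRow c, hlt, hone c⟩, ⟨c', hjj', hone c'⟩⟩
    rw [Bool.eq_false_iff, ne_eq, T.f_eq_true_iff]
    exact fun heq => hlt.ne' (congrArg Fin.val heq)

def ofTableauRows (u : List Bool) (r : List ℕ) (hr : IsTableauRows (eastHeights u) r) :
    CatalanTableau (u.length + 1) where
  k := u.count true + 1
  m := u.count false
  hk := Nat.succ_pos _
  hkm := by rw [← count_true_add_count_false u]; omega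
  lam i := rowLength u i
  lam_le i := by simpa using antitone_rowLength u (Nat.zero_le i)
  lam_first := rowLength_zero u
  lam_anti _ _ hij := antitone_rowLength u hij
  f i j := decide ((i : ℕ) = r[(j : ℕ)]'(by simp [hr.1.length_eq]))
  f_outside i j hj := by
    obtain ⟨_, hle, _⟩ := isTableauRows_iff.1 hr
    have hj' : (j : ℕ) < (eastHeights u).length := by simp
    rw [decide_eq_false_iff_not]
    intro heq
    have := (count_false_sub_rowLength_le_iff _ hj').2 (heq ▸ hle j hj')
    omega
  col_one j := by
    obtain ⟨_, hle, _⟩ := isTableauRows_iff.1 hr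
    have hj : (j : ℕ) < (eastHeights u).length := by simp
    have hbound := (hle j hj).trans (le_count_true_of_mem_eastHeights (getElem_mem hj))
    exact ⟨⟨_, Nat.lt_succ_of_le hbound⟩, by simp, fun i hi => Fin.ext (by simpa using hi)⟩
  no_bad i j hij hf := by
    rintro ⟨⟨i', hi'i, hi'⟩, ⟨j', hjj', hi⟩⟩
    obtain ⟨_, _, hpair⟩ := isTableauRows_iff.1 hr
    have hj : (j : ℕ) < (eastHeights u).length := by simp
    simp only [decide_eq_true_eq, decide_eq_false_iff_not] at hi' hi hf
    have := hpair j j' hjj' (by simp) (hi ▸ (count_false_sub_rowLength_le_iff _ hj).1 hij)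
    rw [Fin.lt_def] at hi'i
    omega

variable {u : List Bool} {r : List ℕ} (hr : IsTableauRows (eastHeights u) r)

theorem profile_ofTableauRows : (ofTableauRows u r hr).profile = u := by
  have hrow : (ofTableauRows u r hr).rowLen = rowLength u := funext fun i => by
    unfold rowLen
    split_ifs with hi
    · rfl
    · have hi : ¬ i < u.count true + 1 := hi
      exact (rowLength_eq_zero (by omega)).symm
  have := (ofTableauRows u r hr).blocks_rowLen
  rw [hrow] at this
  exact cons_injective (this.symm.trans (blocks_rowLength u))

theorem rowSeq_ofTableauRows : (ofTableauRows u r hr).rowSeq = r := by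
  refine ext_getElem (by simp [ofTableauRows, hr.1.length_eq]) fun j hj hj' => ?_
  rw [getElem_rowSeq]
  simpa [ofTableauRows] using (ofTableauRows u r hr).f_eq_true_iff.2 rfl

end CatalanTableau

theorem card_profile_eq_card_isTableauRows (u : List Bool) :
    Nat.card {T : CatalanTableau (u.length + 1) // T.profile = u} =
      Nat.card {r : List ℕ // IsTableauRows (eastHeights u) r} := by
  refine Nat.card_eq_of_bijective
    (fun T => ⟨T.1.rowSeq, T.1.isTableauRows_rowSeq T.2⟩) ⟨?_, ?_⟩
  · rintro ⟨T, hT⟩ ⟨T', hT'⟩ hrow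
    obtain ⟨hk, hm, hlam⟩ := T.shape_of_profile_eq hT
    obtain ⟨hk', hm', hlam'⟩ := T'.shape_of_profile_eq hT'
    exact Subtype.ext (CatalanTableau.eq_of_rowSeq_eq (hk.trans hk'.symm) (hm.trans hm'.symm)
      (hlam.trans hlam'.symm) (congrArg Subtype.val hrow))
  · rintro ⟨r, hr⟩
    exact ⟨⟨_, CatalanTableau.profile_ofTableauRows hr⟩,
      Subtype.ext (CatalanTableau.rowSeq_ofTableauRows hr)⟩

theorem card_catalanTableau_profile_eq_card_paths_below_general
    (n : ℕ) (u : List Bool) (hu : u.length = n) :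
    Nat.card {T : CatalanTableau (n + 1) // T.profile = u} =
      Nat.card {η : List Bool // weaklyBelow u η} := by
  subst hu
  rw [card_profile_eq_card_isTableauRows,
    ← card_sortedLE_eq_card_isTableauRows (sortedLE_eastHeights u),
    card_weaklyBelow_eq_card_sortedLE]

/-- For every integer `n ≥ 1` and every word `u` of length `n` over
`{a, b}`, the number of Catalan tableaux of index `n + 1` whose profile is `u`
equals the number of lattice paths `η` (with unit north and east steps) that are
weakly below the path `ω_u`. -/
theorem card_catalanTableau_profile_eq_card_paths_below
    (n : ℕ) (hn : 1 ≤ n) (u : List Bool) (hu : u.length = n) :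
    Nat.card {T : CatalanTableau (n + 1) // T.profile = u} =
      Nat.card {η : List Bool // weaklyBelow u η} :=
  card_catalanTableau_profile_eq_card_paths_below_general n u hu
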